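/- Let M = (E, ρ) be a matroid and X ⊂ Y ⊆ E two sets such that Y is a dependent set of full rank (ρ(Y) = ρ(E) and ρ(Y) < |Y|) and X is an independent set with ρ(X) < ρ(E). Set k = ρ(E) − ρ(X) and n = |Y − X|. Then the minor M|Y/X is isomorphic to the uniform matroid U_n^k (equivalently, ρ(A ∪ X) − ρ(X) = min(|A|, k) for every A ⊆ Y − X) if and only if all three of the following hold: (1) cl(X) ∩ Y = X; (2) Y − X ⊆ cyc(Y); and (3) for every cyclic flat Z of M, either Z ∩ Y is independent in M or cl(X ∪ cyc(Z ∩ Y)) = E. -/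

import Mathlib

open Finset

structure FinMatroid (α : Type*) [DecidableEq α] where
  E : Finset α
  rk : Finset α → ℕ
  rk_le_card : ∀ A, A ⊆ E → rk A ≤ A.card
  rk_mono : ∀ A B, A ⊆ B → B ⊆ E → rk A ≤ rk B
  rk_submod : ∀ A B, A ⊆ E → B ⊆ E → rk (A ∪ B) + rk (A ∩ B) ≤ rk A + rk B

namespace FinMatroid

variable {α : Type*} [DecidableEq α]

/-- The closure operator `cl(A) = {e ∈ E : ρ(A ∪ {e}) = ρ(A)}`. -/
def cl (M : FinMatroid α) (A : Finset α) : Finset α :=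
  M.E.filter fun e => M.rk (insert e A) = M.rk A

/-- The cyclic operator `cyc(A) = {e ∈ A : ρ(A − {e}) = ρ(A)}`. -/
def cyc (M : FinMatroid α) (A : Finset α) : Finset α :=
  A.filter fun e => M.rk (A.erase e) = M.rk A

/-- A flat is a set fixed by the closure operator. -/
def IsFlat (M : FinMatroid α) (F : Finset α) : Prop :=
  F ⊆ M.E ∧ M.cl F = F

/-- A cyclic set is a set fixed by the cyclic operator. -/
def IsCyclic (M : FinMatroid α) (U : Finset α) : Prop :=
  U ⊆ M.E ∧ M.cyc U = U

/-- A cyclic flat is a set fixed by both the closure and the cyclic operators. -/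
def IsCyclicFlat (M : FinMatroid α) (Z : Finset α) : Prop :=
  Z ⊆ M.E ∧ M.cl Z = Z ∧ M.cyc Z = Z

/-- The minor `M|Y/X`: restriction to `Y` followed by contraction of `X`. -/
def minor (M : FinMatroid α) (X Y : Finset α) (hXY : X ⊆ Y) (hY : Y ⊆ M.E) :
    FinMatroid α where
  E := Y \ X
  rk A := M.rk (A ∪ X) - M.rk X
  rk_le_card := by
    intro A hA
    have hAE : A ⊆ M.E := fun a ha => hY (mem_sdiff.mp (hA ha)).1
    have hXE : X ⊆ M.E := hXY.trans hY
    have h1 := M.rk_submod A X hAE hXE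
    have h2 := M.rk_le_card A hAE
    show M.rk (A ∪ X) - M.rk X ≤ A.card
    omega
  rk_mono := by
    intro A B hAB hB
    have hBE : B ⊆ M.E := fun a ha => hY (mem_sdiff.mp (hB ha)).1
    have hBX : B ∪ X ⊆ M.E := union_subset hBE (hXY.trans hY)
    have := M.rk_mono (A ∪ X) (B ∪ X) (union_subset_union hAB Subset.rfl) hBX
    show M.rk (A ∪ X) - M.rk X ≤ M.rk (B ∪ X) - M.rk X
    omega
  rk_submod := by
    intro A B hA hB
    have hAE : A ⊆ M.E := fun a ha => hY (mem_sdiff.mp (hA ha)).1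
    have hBE : B ⊆ M.E := fun a ha => hY (mem_sdiff.mp (hB ha)).1
    have hXE : X ⊆ M.E := hXY.trans hY
    have hAX : A ∪ X ⊆ M.E := union_subset hAE hXE
    have hBX : B ∪ X ⊆ M.E := union_subset hBE hXE
    have hsub := M.rk_submod (A ∪ X) (B ∪ X) hAX hBX
    have e1 : (A ∪ X) ∪ (B ∪ X) = (A ∪ B) ∪ X := by
      ext x; simp only [mem_union]; tauto
    have e2 : (A ∪ X) ∩ (B ∪ X) = (A ∩ B) ∪ X := by
      ext x; simp only [mem_union, mem_inter]; tauto
    rw [e1, e2] at hsub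
    have h1 : M.rk X ≤ M.rk (A ∪ X) := M.rk_mono X _ subset_union_right hAX
    have h2 : M.rk X ≤ M.rk (B ∪ X) := M.rk_mono X _ subset_union_right hBX
    have hIX : (A ∩ B) ∪ X ⊆ M.E := union_subset (inter_subset_left.trans hAE) hXE
    have hUX : (A ∪ B) ∪ X ⊆ M.E := union_subset (union_subset hAE hBE) hXE
    have h3 : M.rk X ≤ M.rk ((A ∩ B) ∪ X) := M.rk_mono X _ subset_union_right hIX
    have h4 : M.rk X ≤ M.rk ((A ∪ B) ∪ X) := M.rk_mono X _ subset_union_right hUX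
    show M.rk ((A ∪ B) ∪ X) - M.rk X + (M.rk ((A ∩ B) ∪ X) - M.rk X) ≤
      (M.rk (A ∪ X) - M.rk X) + (M.rk (B ∪ X) - M.rk X)
    omega

/-- The restriction `M|Y`. -/
def restrict (M : FinMatroid α) (Y : Finset α) (hY : Y ⊆ M.E) : FinMatroid α where
  E := Y
  rk := M.rk
  rk_le_card := fun A hA => M.rk_le_card A (hA.trans hY)
  rk_mono := fun A B hAB hB => M.rk_mono A B hAB (hB.trans hY)
  rk_submod := fun A B hA hB => M.rk_submod A B (hA.trans hY) (hB.trans hY)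

/-- `M` is binary: it is the matroid of linear dependence of a family of
vectors over the field with two elements. -/
def IsBinary (M : FinMatroid α) : Prop :=
  ∃ (m : ℕ) (φ : α → (Fin m → ZMod 2)),
    ∀ A : Finset α, A ⊆ M.E →
      M.rk A = Module.finrank (ZMod 2) (Submodule.span (ZMod 2) (φ '' (A : Set α)))

def Simple (M : FinMatroid α) : Prop :=
  (∀ e ∈ M.E, M.rk {e} = 1) ∧
    ∀ e ∈ M.E, ∀ f ∈ M.E, e ≠ f → M.rk ({e, f} : Finset α) = 2

def NoIsthmus (M : FinMatroid α) : Prop :=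
  ∀ e ∈ M.E, M.rk (M.E.erase e) = M.rk M.E

def IsMinDist (M : FinMatroid α) (d : ℕ) : Prop :=
  (∃ X ⊆ M.E, M.rk (M.E \ X) < M.rk M.E ∧ X.card = d) ∧
    ∀ X ⊆ M.E, M.rk (M.E \ X) < M.rk M.E → d ≤ X.card

def IsAtomCF (M : FinMatroid α) (Z : Finset α) : Prop :=
  M.IsCyclicFlat Z ∧ Z ≠ ∅ ∧ ¬ ∃ Z', M.IsCyclicFlat Z' ∧ ∅ ⊂ Z' ∧ Z' ⊂ Z

def IsCoatomCF (M : FinMatroid α) (Z : Finset α) : Prop :=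
  M.IsCyclicFlat Z ∧ Z ⊂ M.E ∧ ¬ ∃ Z', M.IsCyclicFlat Z' ∧ Z ⊂ Z' ∧ Z' ⊂ M.E

def IsCircuit (M : FinMatroid α) (C : Finset α) : Prop :=
  C ⊆ M.E ∧ M.rk C < C.card ∧ ∀ D ⊂ C, M.rk D = D.card

end FinMatroid

/-!
Write `k = ρ(E) − ρ(X)`. The forward direction is counting inside the uniform minor; for (3), note
that `cyc W` is dependent whenever `W` is, so over `X` it must already have rank `k`. For the
converse, a circuit `C ⊆ Y` spans the cyclic flat `Z = cl C`, and `C ⊆ cyc (Z ∩ Y)`, so condition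
(3) forces `ρ(X ∪ cyc (Z ∩ Y)) = ρ(E)`; submodularity against the independent set `X` then gives
`|C − X| > k`. Hence no circuit fits into `A ∪ X` when `A ⊆ Y − X` has at most `k` elements, and
all such `A ∪ X` are independent, which is the uniformity of `M|Y/X`.
-/

namespace FinMatroid

variable {α : Type*} [DecidableEq α] (M : FinMatroid α)

lemma rk_le_rk_add_card_sdiff {A B : Finset α} (hBA : B ⊆ A) (hA : A ⊆ M.E) :
    M.rk A ≤ M.rk B + (A \ B).card := by
  have h := M.rk_submod B (A \ B) (hBA.trans hA) (sdiff_subset.trans hA)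
  rw [union_sdiff_of_subset hBA] at h
  have := M.rk_le_card (A \ B) (sdiff_subset.trans hA)
  omega

lemma rk_eq_card_of_subset {A B : Finset α} (hA : M.rk A = A.card) (hBA : B ⊆ A)
    (hAE : A ⊆ M.E) : M.rk B = B.card := by
  have h1 := M.rk_le_rk_add_card_sdiff hBA hAE
  have h2 := M.rk_le_card B (hBA.trans hAE)
  have h3 := card_sdiff_add_card_eq_card hBA
  omega

lemma rk_insert_eq_of_subset {T T' : Finset α} {e : α} (hTT' : T ⊆ T') (hT' : T' ⊆ M.E)
    (he : e ∈ M.E) (h : M.rk (insert e T) = M.rk T) : M.rk (insert e T') = M.rk T' := by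
  have hsub := M.rk_submod (insert e T) T' (insert_subset he (hTT'.trans hT')) hT'
  rw [insert_union, union_eq_right.2 hTT'] at hsub
  have h1 : M.rk T ≤ M.rk (insert e T ∩ T') :=
    M.rk_mono _ _ (subset_inter (subset_insert e T) hTT') (inter_subset_right.trans hT')
  have h2 : M.rk T' ≤ M.rk (insert e T') :=
    M.rk_mono _ _ (subset_insert e T') (insert_subset he hT')
  omega

lemma rk_eq_of_forall_rk_insert_eq {T T' : Finset α} (hTT' : T ⊆ T') (hT' : T' ⊆ M.E)
    (h : ∀ e ∈ T', M.rk (insert e T) = M.rk T) : M.rk T' = M.rk T := by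
  suffices ∀ s ⊆ T', M.rk (T ∪ s) = M.rk T by
    simpa [union_eq_right.2 hTT'] using this T' Subset.rfl
  intro s
  induction s using Finset.induction_on with
  | empty => simp
  | insert e s _ ih =>
    intro hes
    have hs : s ⊆ T' := (subset_insert e s).trans hes
    have heT' : e ∈ T' := hes (mem_insert_self e s)
    rw [union_insert, M.rk_insert_eq_of_subset subset_union_left
      (union_subset (hTT'.trans hT') (hs.trans hT')) (hT' heT') (h e heT'), ih hs]

lemma cl_subset_ground (T : Finset α) : M.cl T ⊆ M.E := filter_subset _ _

lemma cyc_subset (W : Finset α) : M.cyc W ⊆ W := filter_subset _ _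

variable {M}

lemma subset_cl {T : Finset α} (hT : T ⊆ M.E) : T ⊆ M.cl T :=
  fun e he => mem_filter.2 ⟨hT he, by rw [insert_eq_of_mem he]⟩

lemma rk_cl {T : Finset α} (hT : T ⊆ M.E) : M.rk (M.cl T) = M.rk T :=
  M.rk_eq_of_forall_rk_insert_eq (subset_cl hT) (M.cl_subset_ground T)
    fun _ he => (mem_filter.1 he).2

lemma cl_cl {T : Finset α} (hT : T ⊆ M.E) : M.cl (M.cl T) = M.cl T := by
  refine Subset.antisymm (fun e he => ?_) (subset_cl (M.cl_subset_ground T))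
  obtain ⟨heE, hrk⟩ := mem_filter.1 he
  have h1 : M.rk (insert e T) ≤ M.rk (insert e (M.cl T)) :=
    M.rk_mono _ _ (insert_subset_insert e (subset_cl hT))
      (insert_subset heE (M.cl_subset_ground T))
  have h2 : M.rk T ≤ M.rk (insert e T) :=
    M.rk_mono _ _ (subset_insert e T) (insert_subset heE hT)
  rw [rk_cl hT] at hrk
  exact mem_filter.2 ⟨heE, by omega⟩

lemma cl_eq_ground_iff {T : Finset α} (hT : T ⊆ M.E) : M.cl T = M.E ↔ M.rk T = M.rk M.E := by
  refine ⟨fun h => by rw [← rk_cl hT, h], fun h => filter_eq_self.2 fun e he => ?_⟩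
  have h1 : M.rk T ≤ M.rk (insert e T) :=
    M.rk_mono _ _ (subset_insert e T) (insert_subset he hT)
  have h2 : M.rk (insert e T) ≤ M.rk M.E := M.rk_mono _ _ (insert_subset he hT) Subset.rfl
  omega

lemma IsCyclic.isCyclicFlat_cl {T : Finset α} (hT : M.IsCyclic T) :
    M.IsCyclicFlat (M.cl T) := by
  refine ⟨M.cl_subset_ground T, cl_cl hT.1, filter_eq_self.2 fun e he => ?_⟩
  have hclE := M.cl_subset_ground T
  have hle : M.rk ((M.cl T).erase e) ≤ M.rk (M.cl T) :=
    M.rk_mono _ _ (erase_subset e _) hclE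
  rw [rk_cl hT.1] at hle ⊢
  by_cases heT : e ∈ T
  · have hcyc : e ∈ M.cyc T := by rw [hT.2]; exact heT
    have := (mem_filter.1 hcyc).2
    have := M.rk_mono _ _ (erase_subset_erase e (subset_cl hT.1)) ((erase_subset e _).trans hclE)
    omega
  · have := M.rk_mono _ _ (subset_erase.2 ⟨subset_cl hT.1, heT⟩) ((erase_subset e _).trans hclE)
    omega

lemma exists_isCircuit_subset {A : Finset α} (hA : A ⊆ M.E) (hdep : M.rk A < A.card) :
    ∃ C ⊆ A, M.IsCircuit C := by
  obtain ⟨C, hC, hCmin⟩ :=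
    exists_minimal (s := A.powerset.filter fun C => M.rk C < C.card) ⟨A, by simp [hdep]⟩
  obtain ⟨hCA, hCdep⟩ : C ⊆ A ∧ M.rk C < C.card := by simpa using hC
  refine ⟨C, hCA, hCA.trans hA, hCdep, fun D hDC => ?_⟩
  refine le_antisymm (M.rk_le_card D (hDC.subset.trans (hCA.trans hA))) (not_lt.1 fun hD => ?_)
  exact hDC.not_subset (hCmin (by simpa using ⟨hDC.subset.trans hCA, hD⟩) hDC.subset)

lemma IsCircuit.rk_eq {C : Finset α} (hC : M.IsCircuit C) : M.rk C = C.card - 1 := by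
  obtain ⟨e, he⟩ := card_pos.1 (pos_of_gt hC.2.1)
  have h1 := hC.2.2 _ (erase_ssubset he)
  have h2 := M.rk_mono _ _ (erase_subset e C) hC.1
  rw [card_erase_of_mem he] at h1
  have := hC.2.1
  omega

lemma IsCircuit.subset_cyc {C W : Finset α} (hC : M.IsCircuit C) (hCW : C ⊆ W)
    (hW : W ⊆ M.E) : C ⊆ M.cyc W := by
  intro e he
  have hins : M.rk (insert e (C.erase e)) = M.rk (C.erase e) := by
    rw [insert_erase he, hC.2.2 _ (erase_ssubset he), card_erase_of_mem he, hC.rk_eq]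
  have h := M.rk_insert_eq_of_subset (erase_subset_erase e hCW) ((erase_subset e W).trans hW)
    (hW (hCW he)) hins
  rw [insert_erase (hCW he)] at h
  exact mem_filter.2 ⟨hCW he, h.symm⟩

lemma IsCircuit.isCyclic {C : Finset α} (hC : M.IsCircuit C) : M.IsCyclic C :=
  ⟨hC.1, Subset.antisymm (M.cyc_subset C) (hC.subset_cyc Subset.rfl hC.1)⟩

lemma rk_cyc_lt_card {W : Finset α} (hW : W ⊆ M.E) (hdep : M.rk W < W.card) :
    M.rk (M.cyc W) < (M.cyc W).card := by
  obtain ⟨C, hCW, hC⟩ := exists_isCircuit_subset hW hdep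
  by_contra! h
  have hind := le_antisymm (M.rk_le_card _ ((M.cyc_subset W).trans hW)) h
  exact hC.2.1.ne
    (M.rk_eq_card_of_subset hind (hC.subset_cyc hCW hW) ((M.cyc_subset W).trans hW))

section UniformMinor

variable {X Y : Finset α}

lemma rk_union_eq_min_of_uniform (hXY : X ⊆ Y) (hYE : Y ⊆ M.E)
    (hU : ∀ A ⊆ Y \ X, M.rk (A ∪ X) - M.rk X = min A.card (M.rk M.E - M.rk X))
    {A : Finset α} (hA : A ⊆ Y \ X) : M.rk (A ∪ X) = min (M.rk X + A.card) (M.rk M.E) := by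
  have hAX : A ∪ X ⊆ M.E := union_subset (hA.trans (sdiff_subset.trans hYE)) (hXY.trans hYE)
  have h1 := hU A hA
  have h2 := M.rk_mono _ _ subset_union_right hAX
  have h3 := M.rk_mono _ _ (hXY.trans hYE) Subset.rfl
  omega

lemma cl_inter_eq_of_uniform (hXY : X ⊆ Y) (hYE : Y ⊆ M.E) (hXr : M.rk X < M.rk M.E)
    (hU : ∀ A ⊆ Y \ X, M.rk (A ∪ X) - M.rk X = min A.card (M.rk M.E - M.rk X)) :
    M.cl X ∩ Y = X := by
  refine Subset.antisymm (fun e he => ?_) (subset_inter (subset_cl (hXY.trans hYE)) hXY)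
  obtain ⟨hecl, heY⟩ := mem_inter.1 he
  by_contra heX
  have h := rk_union_eq_min_of_uniform hXY hYE hU
    (singleton_subset_iff.2 (mem_sdiff.2 ⟨heY, heX⟩))
  rw [singleton_union, (mem_filter.1 hecl).2, card_singleton] at h
  omega

lemma sdiff_subset_cyc_of_uniform (hXY : X ⊆ Y) (hYE : Y ⊆ M.E)
    (hYfull : M.rk Y = M.rk M.E) (hYdep : M.rk Y < Y.card) (hXind : M.rk X = X.card)
    (hU : ∀ A ⊆ Y \ X, M.rk (A ∪ X) - M.rk X = min A.card (M.rk M.E - M.rk X)) :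
    Y \ X ⊆ M.cyc Y := by
  intro e he
  obtain ⟨heY, heX⟩ := mem_sdiff.1 he
  have hunion : (Y \ X).erase e ∪ X = Y.erase e := by
    rw [← erase_sdiff_comm, sdiff_union_of_subset (subset_erase.2 ⟨hXY, heX⟩)]
  have h := rk_union_eq_min_of_uniform hXY hYE hU (erase_subset e (Y \ X))
  rw [hunion, card_erase_of_mem he, card_sdiff_of_subset hXY] at h
  have := card_le_card hXY
  exact mem_filter.2 ⟨heY, by omega⟩

lemma rk_eq_card_or_cl_union_cyc_eq_ground_of_uniform (hXY : X ⊆ Y) (hYE : Y ⊆ M.E)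
    (hXind : M.rk X = X.card)
    (hU : ∀ A ⊆ Y \ X, M.rk (A ∪ X) - M.rk X = min A.card (M.rk M.E - M.rk X))
    {W : Finset α} (hWY : W ⊆ Y) : M.rk W = W.card ∨ M.cl (X ∪ M.cyc W) = M.E := by
  refine or_iff_not_imp_left.2 fun hW => ?_
  have hWE := hWY.trans hYE
  have hD : M.rk (M.cyc W) < (M.cyc W).card :=
    rk_cyc_lt_card hWE (lt_of_le_of_ne (M.rk_le_card W hWE) hW)
  have hDX : M.cyc W ∪ X ⊆ M.E := union_subset ((M.cyc_subset W).trans hWE) (hXY.trans hYE)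
  have h := rk_union_eq_min_of_uniform hXY hYE hU
    (sdiff_subset_sdiff ((M.cyc_subset W).trans hWY) Subset.rfl)
  rw [sdiff_union_self_eq_union, hXind, add_comm, card_sdiff_add_card] at h
  rw [union_comm, cl_eq_ground_iff hDX]
  by_contra hfull
  have hind : M.rk (M.cyc W ∪ X) = (M.cyc W ∪ X).card := by omega
  exact hD.ne (M.rk_eq_card_of_subset hind subset_union_left hDX)

lemma rk_ground_lt_of_isCircuit (hXY : X ⊆ Y) (hYE : Y ⊆ M.E) (hXind : M.rk X = X.card)
    (hZ : ∀ Z, M.IsCyclicFlat Z →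
      M.rk (Z ∩ Y) = (Z ∩ Y).card ∨ M.cl (X ∪ M.cyc (Z ∩ Y)) = M.E)
    {C : Finset α} (hC : M.IsCircuit C) (hCY : C ⊆ Y) :
    M.rk M.E < M.rk X + (C \ X).card := by
  have hXE := hXY.trans hYE
  have hCZY : C ⊆ M.cl C ∩ Y := subset_inter (subset_cl hC.1) hCY
  have hZYE : M.cl C ∩ Y ⊆ M.E := inter_subset_right.trans hYE
  obtain hind | hcl := hZ _ hC.isCyclic.isCyclicFlat_cl
  · exact absurd (M.rk_eq_card_of_subset hind hCZY hZYE) hC.2.1.ne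
  have hCS : C ⊆ M.cyc (M.cl C ∩ Y) := hC.subset_cyc hCZY hZYE
  have hSZ : M.cyc (M.cl C ∩ Y) ⊆ M.cl C := (M.cyc_subset _).trans inter_subset_left
  have hSE := hSZ.trans (M.cl_subset_ground C)
  have hXS := (cl_eq_ground_iff (union_subset hXE hSE)).1 hcl
  have hS := rk_cl hC.1 ▸ M.rk_mono _ _ hSZ (M.cl_subset_ground C)
  have hsub := M.rk_submod X _ hXE hSE
  have hXSind :=
    M.rk_eq_card_of_subset hXind (inter_subset_left (s₂ := M.cyc (M.cl C ∩ Y))) hXE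
  have hCX : (C ∩ X).card ≤ (X ∩ M.cyc (M.cl C ∩ Y)).card :=
    card_le_card fun a ha => mem_inter.2 ⟨(mem_inter.1 ha).2, hCS (mem_inter.1 ha).1⟩
  have hsplit := card_inter_add_card_sdiff C X
  have := hC.rk_eq
  have := hC.2.1
  omega

lemma rk_union_eq_of_card_le (hXY : X ⊆ Y) (hYE : Y ⊆ M.E) (hXind : M.rk X = X.card)
    (hZ : ∀ Z, M.IsCyclicFlat Z →
      M.rk (Z ∩ Y) = (Z ∩ Y).card ∨ M.cl (X ∪ M.cyc (Z ∩ Y)) = M.E)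
    {A : Finset α} (hA : A ⊆ Y \ X) (hk : M.rk X + A.card ≤ M.rk M.E) :
    M.rk (A ∪ X) = M.rk X + A.card := by
  have hAXY : A ∪ X ⊆ Y := union_subset (hA.trans sdiff_subset) hXY
  have hcard : (A ∪ X).card = A.card + X.card :=
    card_union_of_disjoint (disjoint_of_subset_left hA sdiff_disjoint)
  by_contra hne
  obtain ⟨C, hCAX, hC⟩ := exists_isCircuit_subset (hAXY.trans hYE)
    (by have := M.rk_le_card _ (hAXY.trans hYE); omega)
  have hCX : (C \ X).card ≤ A.card := card_le_card fun a ha =>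
    (mem_union.1 (hCAX (mem_sdiff.1 ha).1)).resolve_right (mem_sdiff.1 ha).2
  have := rk_ground_lt_of_isCircuit hXY hYE hXind hZ hC (hCAX.trans hAXY)
  omega

lemma rk_union_sub_eq_min_of_forall_isCyclicFlat (hXY : X ⊆ Y) (hYE : Y ⊆ M.E)
    (hYfull : M.rk Y = M.rk M.E) (hXind : M.rk X = X.card)
    (hZ : ∀ Z, M.IsCyclicFlat Z →
      M.rk (Z ∩ Y) = (Z ∩ Y).card ∨ M.cl (X ∪ M.cyc (Z ∩ Y)) = M.E)
    {A : Finset α} (hA : A ⊆ Y \ X) :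
    M.rk (A ∪ X) - M.rk X = min A.card (M.rk M.E - M.rk X) := by
  by_cases hk : M.rk X + A.card ≤ M.rk M.E
  · have := rk_union_eq_of_card_le hXY hYE hXind hZ hA hk
    omega
  have hXle := M.rk_mono _ _ hXY hYE
  obtain ⟨A', hA'A, hA'card⟩ :=
    exists_subset_card_eq (s := A) (n := M.rk M.E - M.rk X) (by omega)
  have h1 := rk_union_eq_of_card_le hXY hYE hXind hZ (hA'A.trans hA) (by omega)
  have hAXY : A ∪ X ⊆ Y := union_subset (hA.trans sdiff_subset) hXY
  have h2 := M.rk_mono _ _ (union_subset_union hA'A Subset.rfl) (hAXY.trans hYE)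
  have h3 := M.rk_mono _ _ hAXY hYE
  omega

end UniformMinor

end FinMatroid

/-- For `X ⊂ Y ⊆ E` with `Y` a dependent full-rank set and `X`
independent of non-full rank, with `k = ρ(E) − ρ(X)`, the minor `M|Y/X` is uniform
(`ρ(A ∪ X) − ρ(X) = min(|A|, k)` for all `A ⊆ Y − X`) iff (1) `cl(X) ∩ Y = X`,
(2) `Y − X ⊆ cyc(Y)`, and (3) for every cyclic flat `Z`, either `Z ∩ Y` is
independent or `cl(X ∪ cyc(Z ∩ Y)) = E`. -/
theorem minor_uniform_iff {α : Type*} [DecidableEq α] (M : FinMatroid α)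
    (X Y : Finset α) (hXY : X ⊂ Y) (hYE : Y ⊆ M.E)
    (hYfull : M.rk Y = M.rk M.E) (hYdep : M.rk Y < Y.card)
    (hXind : M.rk X = X.card) (hXr : M.rk X < M.rk M.E) :
    (∀ A ⊆ Y \ X, M.rk (A ∪ X) - M.rk X = min A.card (M.rk M.E - M.rk X)) ↔
      (M.cl X ∩ Y = X ∧ Y \ X ⊆ M.cyc Y ∧
        ∀ Z, M.IsCyclicFlat Z →
          (M.rk (Z ∩ Y) = (Z ∩ Y).card ∨ M.cl (X ∪ M.cyc (Z ∩ Y)) = M.E)) := by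
  open FinMatroid in
  constructor
  · intro hU
    exact ⟨cl_inter_eq_of_uniform hXY.subset hYE hXr hU,
      sdiff_subset_cyc_of_uniform hXY.subset hYE hYfull hYdep hXind hU,
      fun Z _ => rk_eq_card_or_cl_union_cyc_eq_ground_of_uniform hXY.subset hYE hXind hU
        inter_subset_right⟩
  · rintro ⟨-, -, hZ⟩ A hA
    exact rk_union_sub_eq_min_of_forall_isCyclicFlat hXY.subset hYE hYfull hXind hZ hA
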